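/- arXiv:math-ph/0211024 — 3 statements merged into one kernel-verified Lean document; each statement's English description precedes it below -/
import Mathlib

section
/- Let 0 < σ ≤ 1 and set v₀(t) = (1+t²)^{−(3−σ)/2}, v₁(t) = (1+t²)^{−(1−σ)/2} for t > 0. Then sup_{0 < τ < ∞} ( ∫₀^τ v₀(t) t² dt )^{1/2} ( ∫_τ^∞ [v₁(t) t²]^{−1} dt )^{1/2} < ∞. -/
/-!
The first integrand `v₀(t) t²` is bounded both by `t²` and by `t^(σ-1)`, so the first
integral is `O(τ³)` for `τ ≤ 1` and `O(τ^σ)` for `τ ≥ 1`. Since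
`(1 + t²)^((1-σ)/2) ≤ 1 + t^(1-σ)`, the second integrand is at most `t⁻² + t^(-1-σ)`, so the
second integral is `O(τ⁻¹)` for `τ ≤ 1` and `O(τ^(-σ))` for `τ ≥ 1`; this is where `σ > 0` is
needed. In both regimes the product of the two integrals stays bounded.
-/

open MeasureTheory Set

namespace GurkaOpic

variable {σ t τ : ℝ}

lemma weight0_mul_sq_le_sq (hσ : σ ≤ 3) :
    (1 + t ^ 2) ^ (-(3 - σ) / 2) * t ^ 2 ≤ t ^ 2 := by
  have hle_one : (1 + t ^ 2) ^ (-(3 - σ) / 2) ≤ 1 :=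
    Real.rpow_le_one_of_one_le_of_nonpos (by nlinarith [sq_nonneg t]) (by linarith)
  nlinarith [sq_nonneg t]

lemma weight0_mul_sq_le_rpow (hσ : σ ≤ 3) (ht : 0 < t) :
    (1 + t ^ 2) ^ (-(3 - σ) / 2) * t ^ 2 ≤ t ^ (σ - 1) := by
  calc (1 + t ^ 2) ^ (-(3 - σ) / 2) * t ^ 2
      ≤ (t ^ 2) ^ (-(3 - σ) / 2) * t ^ 2 := by
        refine mul_le_mul_of_nonneg_right ?_ (sq_nonneg t)
        exact Real.rpow_le_rpow_of_nonpos (by positivity) (by linarith) (by linarith)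
    _ = t ^ (σ - 1) := by
        rw [← Real.rpow_natCast_mul ht.le, ← Real.rpow_add_natCast ht.ne']
        norm_num
        ring_nf

lemma inv_weight1_mul_sq_le (hσ : -1 ≤ σ) (hσ1 : σ ≤ 1) (ht : 0 < t) :
    ((1 + t ^ 2) ^ (-(1 - σ) / 2) * t ^ 2)⁻¹ ≤ t ^ (-2 : ℝ) + t ^ (-1 - σ) := by
  have hsub : (1 + t ^ 2) ^ ((1 - σ) / 2) ≤ 1 + t ^ (1 - σ) := by
    have h := Real.rpow_add_le_add_rpow zero_le_one (sq_nonneg t)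
      (p := (1 - σ) / 2) (by linarith) (by linarith)
    rwa [Real.one_rpow, ← Real.rpow_natCast_mul ht.le,
      show ((2 : ℕ) : ℝ) * ((1 - σ) / 2) = 1 - σ by push_cast; ring] at h
  have hsq : (t ^ 2)⁻¹ = t ^ (-2 : ℝ) := by
    rw [Real.rpow_neg ht.le]
    norm_cast
  calc ((1 + t ^ 2) ^ (-(1 - σ) / 2) * t ^ 2)⁻¹
      = (1 + t ^ 2) ^ ((1 - σ) / 2) * t ^ (-2 : ℝ) := by
        rw [mul_inv, hsq, neg_div, Real.rpow_neg (by positivity), inv_inv]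
    _ ≤ (1 + t ^ (1 - σ)) * t ^ (-2 : ℝ) := by gcongr
    _ = t ^ (-2 : ℝ) + t ^ (-1 - σ) := by
        rw [add_mul, one_mul, ← Real.rpow_add ht]
        ring_nf

lemma integral_weight0_le_cube (hσ : σ ≤ 3) (hτ : 0 ≤ τ) :
    ∫ t in Ioc 0 τ, (1 + t ^ 2) ^ (-(3 - σ) / 2) * t ^ 2 ≤ τ ^ 3 / 3 := by
  calc ∫ t in Ioc 0 τ, (1 + t ^ 2) ^ (-(3 - σ) / 2) * t ^ 2
      ≤ ∫ t in Ioc 0 τ, t ^ 2 :=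
        setIntegral_mono_of_nonneg (fun _ _ => by positivity)
          (fun _ _ => weight0_mul_sq_le_sq hσ) (continuous_pow 2).integrableOn_Ioc
    _ = τ ^ 3 / 3 := by
        rw [← intervalIntegral.integral_of_le hτ, integral_pow]
        norm_num

lemma integral_weight0_le_rpow (hσ0 : 0 < σ) (hσ : σ ≤ 3) (hτ : 0 ≤ τ) :
    ∫ t in Ioc 0 τ, (1 + t ^ 2) ^ (-(3 - σ) / 2) * t ^ 2 ≤ τ ^ σ / σ := by
  calc ∫ t in Ioc 0 τ, (1 + t ^ 2) ^ (-(3 - σ) / 2) * t ^ 2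
      ≤ ∫ t in Ioc 0 τ, t ^ (σ - 1) :=
        setIntegral_mono_of_nonneg (fun _ _ => by positivity)
          (fun _ ht => weight0_mul_sq_le_rpow hσ ht.1)
          (intervalIntegral.intervalIntegrable_rpow' (by linarith)).1
    _ = τ ^ σ / σ := by
        rw [← intervalIntegral.integral_of_le hτ, integral_rpow (Or.inl (by linarith)),
          sub_add_cancel, Real.zero_rpow hσ0.ne', sub_zero]

lemma integral_inv_weight1_le (hσ0 : 0 < σ) (hσ1 : σ ≤ 1) (hτ : 0 < τ) :
    ∫ t in Ioi τ, ((1 + t ^ 2) ^ (-(1 - σ) / 2) * t ^ 2)⁻¹ ≤ τ⁻¹ + τ ^ (-σ) / σ := by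
  have hint2 : IntegrableOn (fun t : ℝ => t ^ (-2 : ℝ)) (Ioi τ) :=
    integrableOn_Ioi_rpow_of_lt (by norm_num) hτ
  have hint1σ : IntegrableOn (fun t : ℝ => t ^ (-1 - σ)) (Ioi τ) :=
    integrableOn_Ioi_rpow_of_lt (by linarith) hτ
  calc ∫ t in Ioi τ, ((1 + t ^ 2) ^ (-(1 - σ) / 2) * t ^ 2)⁻¹
      ≤ ∫ t in Ioi τ, (t ^ (-2 : ℝ) + t ^ (-1 - σ)) :=
        setIntegral_mono_of_nonneg (fun _ _ => by positivity)
          (fun _ ht => inv_weight1_mul_sq_le (by linarith) hσ1 (hτ.trans ht))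
          (hint2.add hint1σ)
    _ = τ⁻¹ + τ ^ (-σ) / σ := by
        rw [integral_add hint2 hint1σ, integral_Ioi_rpow_of_lt (by norm_num) hτ,
          integral_Ioi_rpow_of_lt (by linarith) hτ]
        norm_num [Real.rpow_neg_one]
        ring_nf

lemma integral_weight0_mul_integral_inv_weight1_le (hσ0 : 0 < σ) (hσ1 : σ ≤ 1) (hτ : 0 < τ) :
    (∫ t in Ioc 0 τ, (1 + t ^ 2) ^ (-(3 - σ) / 2) * t ^ 2) *
      (∫ t in Ioi τ, ((1 + t ^ 2) ^ (-(1 - σ) / 2) * t ^ 2)⁻¹) ≤ (1 + σ⁻¹) / σ := by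
  have hI0 : 0 ≤ ∫ t in Ioc 0 τ, (1 + t ^ 2) ^ (-(3 - σ) / 2) * t ^ 2 :=
    setIntegral_nonneg measurableSet_Ioc fun _ _ => by positivity
  have hI1 := integral_inv_weight1_le hσ0 hσ1 hτ
  rcases le_total τ 1 with hτ1 | hτ1
  · have hpow : τ ^ (-σ) ≤ τ⁻¹ := by
      simpa [Real.rpow_neg_one] using
        Real.rpow_le_rpow_of_exponent_ge hτ hτ1 (show -1 ≤ -σ by linarith)
    calc _ ≤ τ ^ 3 / 3 * ((1 + σ⁻¹) * τ⁻¹) := by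
          gcongr
          · exact integral_weight0_le_cube (by linarith) hτ.le
          · calc _ ≤ τ⁻¹ + τ ^ (-σ) / σ := hI1
              _ ≤ τ⁻¹ + τ⁻¹ / σ := by gcongr
              _ = (1 + σ⁻¹) * τ⁻¹ := by ring
      _ = (1 + σ⁻¹) * τ ^ 2 / 3 := by field_simp
      _ ≤ (1 + σ⁻¹) / σ := by
          rw [div_le_div_iff₀ (by norm_num) hσ0]
          have : τ ^ 2 * σ ≤ 3 := by nlinarith [mul_le_one₀ hτ1 hτ.le hτ1]
          have : 0 < 1 + σ⁻¹ := by positivity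
          nlinarith
  · have hinv : τ⁻¹ ≤ τ ^ (-σ) := by
      simpa [Real.rpow_neg_one] using
        Real.rpow_le_rpow_of_exponent_le hτ1 (show -1 ≤ -σ by linarith)
    calc _ ≤ τ ^ σ / σ * ((1 + σ⁻¹) * τ ^ (-σ)) := by
          gcongr
          · exact integral_weight0_le_rpow hσ0 (by linarith) hτ.le
          · calc _ ≤ τ⁻¹ + τ ^ (-σ) / σ := hI1
              _ ≤ τ ^ (-σ) + τ ^ (-σ) / σ := by gcongr
              _ = (1 + σ⁻¹) * τ ^ (-σ) := by ring
      _ = (1 + σ⁻¹) / σ * (τ ^ σ * τ ^ (-σ)) := by ring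
      _ = (1 + σ⁻¹) / σ := by rw [← Real.rpow_add hτ, add_neg_cancel, Real.rpow_zero, mul_one]

end GurkaOpic

/-- Verification of the Gurka–Opic condition for the weights
`v₀(t) = (1+t²)^{-(3-σ)/2}`, `v₁(t) = (1+t²)^{-(1-σ)/2}` with `p = 2`. -/
theorem gurkaOpic_condition (σ : ℝ) (hσ : 0 < σ) (hσ1 : σ ≤ 1) :
    ∃ C : ℝ, ∀ τ : ℝ, 0 < τ →
      (∫ t in Set.Ioc (0 : ℝ) τ, (1 + t ^ 2) ^ (-(3 - σ) / 2) * t ^ 2) ^ ((1 : ℝ) / 2) *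
      (∫ t in Set.Ioi τ, ((1 + t ^ 2) ^ (-(1 - σ) / 2) * t ^ 2)⁻¹) ^ ((1 : ℝ) / 2)
        ≤ C := by
  refine ⟨((1 + σ⁻¹) / σ) ^ ((1 : ℝ) / 2), fun τ hτ => ?_⟩
  have hI0 : 0 ≤ ∫ t in Set.Ioc (0 : ℝ) τ, (1 + t ^ 2) ^ (-(3 - σ) / 2) * t ^ 2 :=
    setIntegral_nonneg measurableSet_Ioc fun _ _ => by positivity
  have hI1 : 0 ≤ ∫ t in Set.Ioi τ, ((1 + t ^ 2) ^ (-(1 - σ) / 2) * t ^ 2)⁻¹ :=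
    setIntegral_nonneg measurableSet_Ioi fun _ _ => by positivity
  rw [← Real.mul_rpow hI0 hI1]
  exact Real.rpow_le_rpow (mul_nonneg hI0 hI1)
    (GurkaOpic.integral_weight0_mul_integral_inv_weight1_le hσ hσ1 hτ) (by norm_num)
end

section
/- Let 0 < σ ≤ 1 and w(x) = (1+|x|²)^{1/2}. There exists a constant C > 0 such that for every u ∈ C¹_c(ℝ³), (∫_{ℝ³} w^{−(3−σ)} |u|² dx)^{1/2} ≤ C (∫_{ℝ³} w^{−(1−σ)} |∇u|² dx)^{1/2}. -/
/-!
With `Q = 1 + ‖x‖²` and `c = (σ - n) / 2`, integrate the divergence of the field `x Q^c u²`: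
`∫ (n Q^c + 2c Q^(c-1) ‖x‖²) u² = -2 ∫ Q^c u ⟨x, ∇u⟩`. For `σ ≤ n` the weight on the left is at
least `σ Q^c`, while `‖x‖² ≤ Q` and AM–GM bound the right side by
`(σ/2) ∫ Q^c u² + (2/σ) ∫ Q^(c+1) ‖∇u‖²`. Hence `∫ Q^c u² ≤ (2/σ)² ∫ Q^(c+1) ‖∇u‖²`, which for
`n = 3` is the claim with `C = 2/σ`.
-/

open MeasureTheory Module

section Euler

variable {E : Type*} [NormedAddCommGroup E] [NormedSpace ℝ E] [FiniteDimensional ℝ E]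
  [MeasurableSpace E] [BorelSpace E] {μ : Measure E} [μ.IsAddHaarMeasure]
  {φ : E → ℝ}

theorem integral_clm_mul_fderiv_apply (hφ : ContDiff ℝ 1 φ) (hsφ : HasCompactSupport φ)
    (ℓ : E →L[ℝ] ℝ) (v : E) :
    ∫ x, ℓ x * fderiv ℝ φ x v ∂μ = -(ℓ v * ∫ x, φ x ∂μ) := by
  have hφ' : Continuous fun x ↦ fderiv ℝ φ x v :=
    (hφ.continuous_fderiv one_ne_zero).clm_apply continuous_const
  rw [integral_mul_fderiv_eq_neg_fderiv_mul_of_integrable]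
  · simp only [ContinuousLinearMap.fderiv, integral_const_mul]
  · simpa only [ContinuousLinearMap.fderiv] using
      (hφ.continuous.integrable_of_hasCompactSupport hsφ).const_mul (ℓ v)
  · exact (ℓ.continuous.mul hφ').integrable_of_hasCompactSupport
      (hsφ.fderiv_apply (𝕜 := ℝ) v).mul_left
  · exact (ℓ.continuous.mul hφ.continuous).integrable_of_hasCompactSupport hsφ.mul_left
  · exact fun x _ ↦ ℓ.differentiableAt
  · exact fun x _ ↦ hφ.differentiable one_ne_zero x

theorem integral_fderiv_apply_self (hφ : ContDiff ℝ 1 φ) (hsφ : HasCompactSupport φ) :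
    ∫ x, fderiv ℝ φ x x ∂μ = -(finrank ℝ E * ∫ x, φ x ∂μ) := by
  let b := finBasis ℝ E
  let coord (k : Fin (finrank ℝ E)) : E →L[ℝ] ℝ :=
    (ContinuousLinearMap.proj k).comp (b.equivFunL : E →L[ℝ] Fin (finrank ℝ E) → ℝ)
  -- expand `x` in a basis and integrate each term by parts against its coordinate
  have hexpand (x : E) : fderiv ℝ φ x x = ∑ k, coord k x * fderiv ℝ φ x (b k) := by
    conv_lhs => rw [← b.sum_equivFun x, map_sum]
    simp [coord, b.equivFunL_apply]
  have hint (k) : Integrable (fun x ↦ coord k x * fderiv ℝ φ x (b k)) μ :=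
    ((coord k).continuous.mul ((hφ.continuous_fderiv one_ne_zero).clm_apply
      continuous_const)).integrable_of_hasCompactSupport (hsφ.fderiv_apply (𝕜 := ℝ) _).mul_left
  simp_rw [hexpand]
  rw [integral_finsetSum _ fun k _ ↦ hint k]
  simp only [integral_clm_mul_fderiv_apply hφ hsφ]
  simp [coord]

end Euler

theorem OrthonormalBasis.sum_sq_apply_eq_norm_sq {ι E : Type*} [Fintype ι]
    [NormedAddCommGroup E] [InnerProductSpace ℝ E] [CompleteSpace E]
    (b : OrthonormalBasis ι ℝ E) (L : StrongDual ℝ E) : ∑ i, L (b i) ^ 2 = ‖L‖ ^ 2 := by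
  set v := (InnerProductSpace.toDual ℝ E).symm L
  have hL : L = InnerProductSpace.toDual ℝ E v := by simp [v]
  simp_rw [hL, LinearIsometryEquiv.norm_map, InnerProductSpace.toDual_apply_apply,
    ← b.sum_sq_norm_inner_left v, Real.norm_eq_abs, sq_abs]

theorem mul_one_add_rpow_le {σ n r : ℝ} (hr : 0 ≤ r) (hσn : σ ≤ n) :
    σ * (1 + r) ^ ((σ - n) / 2) ≤
      n * (1 + r) ^ ((σ - n) / 2) + (σ - n) * (1 + r) ^ ((σ - n) / 2 - 1) * r := by
  have hQ : (1 + r) ^ ((σ - n) / 2) = (1 + r) ^ ((σ - n) / 2 - 1) * (1 + r) := by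
    rw [← Real.rpow_add_one (by positivity)]; ring_nf
  have hpos : 0 ≤ (1 + r) ^ ((σ - n) / 2 - 1) := by positivity
  rw [hQ]
  nlinarith

section Weight

variable {F : Type*} [NormedAddCommGroup F] [InnerProductSpace ℝ F] {u : F → ℝ} {σ n : ℝ}

theorem hasFDerivAt_one_add_norm_sq_rpow (c : ℝ) (x : F) :
    HasFDerivAt (fun y ↦ (1 + ‖y‖ ^ 2) ^ c)
      ((c * (1 + ‖x‖ ^ 2) ^ (c - 1)) • (2 • innerSL ℝ x)) x :=
  ((hasStrictFDerivAt_norm_sq x).hasFDerivAt.const_add 1).rpow_const (Or.inl (by positivity))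

theorem contDiff_one_add_norm_sq_rpow (c : ℝ) : ContDiff ℝ 1 fun y : F ↦ (1 + ‖y‖ ^ 2) ^ c :=
  (contDiff_const.add (contDiff_norm_sq ℝ)).rpow_const_of_ne fun _ ↦ by positivity

theorem fderiv_one_add_norm_sq_rpow_mul_sq_apply_self {x : F}
    (hu : DifferentiableAt ℝ u x) (c : ℝ) :
    fderiv ℝ (fun y ↦ (1 + ‖y‖ ^ 2) ^ c * u y ^ 2) x x =
      2 * c * (1 + ‖x‖ ^ 2) ^ (c - 1) * ‖x‖ ^ 2 * u x ^ 2
        + 2 * (1 + ‖x‖ ^ 2) ^ c * u x * fderiv ℝ u x x := by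
  rw [((hasFDerivAt_one_add_norm_sq_rpow c x).fun_mul (hu.hasFDerivAt.pow 2)).fderiv]
  simp
  ring

theorem le_fderiv_one_add_norm_sq_rpow_mul_sq_apply_self_add {x : F} (hσ : 0 < σ)
    (hσn : σ ≤ n) (hu : DifferentiableAt ℝ u x) :
    σ / 2 * ((1 + ‖x‖ ^ 2) ^ ((σ - n) / 2) * u x ^ 2)
        - 2 / σ * ((1 + ‖x‖ ^ 2) ^ ((σ - n) / 2 + 1) * ‖fderiv ℝ u x‖ ^ 2) ≤
      fderiv ℝ (fun y ↦ (1 + ‖y‖ ^ 2) ^ ((σ - n) / 2) * u y ^ 2) x x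
        + n * ((1 + ‖x‖ ^ 2) ^ ((σ - n) / 2) * u x ^ 2) := by
  rw [fderiv_one_add_norm_sq_rpow_mul_sq_apply_self hu]
  set Q := 1 + ‖x‖ ^ 2
  set c := (σ - n) / 2
  set L := fderiv ℝ u x
  have hQc : 0 ≤ Q ^ c := by positivity
  have hweight : σ * Q ^ c ≤ n * Q ^ c + 2 * c * Q ^ (c - 1) * ‖x‖ ^ 2 := by
    have := mul_one_add_rpow_le (sq_nonneg ‖x‖) hσn
    simp only [Q, c] at this ⊢
    linarith
  have hslope : L x ^ 2 ≤ Q * ‖L‖ ^ 2 :=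
    calc L x ^ 2 = ‖L x‖ ^ 2 := (sq_abs _).symm
      _ ≤ (‖L‖ * ‖x‖) ^ 2 := pow_le_pow_left₀ (norm_nonneg _) (L.le_opNorm x) 2
      _ ≤ Q * ‖L‖ ^ 2 := by nlinarith [sq_nonneg ‖L‖]
  have hQc1 : Q ^ (c + 1) = Q ^ c * Q := Real.rpow_add_one (by positivity) c
  have hamgm : -(2 * u x * L x) ≤ σ / 2 * u x ^ 2 + 2 / σ * L x ^ 2 := by
    have := sq_nonneg (σ / 2 * u x + L x)
    field_simp
    nlinarith
  rw [hQc1]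
  nlinarith [mul_le_mul_of_nonneg_left hamgm hQc,
    mul_le_mul_of_nonneg_left hslope (by positivity : 0 ≤ 2 / σ * Q ^ c),
    mul_le_mul_of_nonneg_right hweight (sq_nonneg (u x))]

variable [FiniteDimensional ℝ F] [MeasurableSpace F] [BorelSpace F] {μ : Measure F}
  [μ.IsAddHaarMeasure]

theorem integral_one_add_norm_sq_rpow_mul_sq_le (hσ : 0 < σ) (hσn : σ ≤ finrank ℝ F)
    (hu : ContDiff ℝ 1 u) (hsu : HasCompactSupport u) :
    ∫ x, (1 + ‖x‖ ^ 2) ^ ((σ - finrank ℝ F) / 2) * u x ^ 2 ∂μ ≤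
      (2 / σ) ^ 2 *
        ∫ x, (1 + ‖x‖ ^ 2) ^ ((σ - finrank ℝ F) / 2 + 1) * ‖fderiv ℝ u x‖ ^ 2 ∂μ := by
  set c := (σ - finrank ℝ F) / 2
  set φ := fun y ↦ (1 + ‖y‖ ^ 2) ^ c * u y ^ 2
  set ψ := fun y ↦ (1 + ‖y‖ ^ 2) ^ (c + 1) * ‖fderiv ℝ u y‖ ^ 2
  have hφ : ContDiff ℝ 1 φ := (contDiff_one_add_norm_sq_rpow c).mul (hu.pow 2)
  have hsφ : HasCompactSupport φ :=
    (hsu.comp_left (g := (· ^ 2)) (zero_pow two_ne_zero)).mul_left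
  have hint_φ : Integrable φ μ := hφ.continuous.integrable_of_hasCompactSupport hsφ
  have hcψ : Continuous ψ := (contDiff_one_add_norm_sq_rpow (c + 1)).continuous.mul
    ((hu.continuous_fderiv one_ne_zero).norm.pow 2)
  have hsψ : HasCompactSupport ψ :=
    ((hsu.fderiv (𝕜 := ℝ)).comp_left (g := fun L : F →L[ℝ] ℝ ↦ ‖L‖ ^ 2)
      (by rw [norm_zero, zero_pow two_ne_zero])).mul_left
  have hint_ψ : Integrable ψ μ := hcψ.integrable_of_hasCompactSupport hsψ
  have hint_dφ : Integrable (fun x ↦ fderiv ℝ φ x x) μ :=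
    ((hφ.continuous_fderiv one_ne_zero).clm_apply continuous_id).integrable_of_hasCompactSupport
      ((hsφ.fderiv (𝕜 := ℝ)).mono fun x hx h0 ↦ hx (by simp [h0]))
  have heuler : ∫ x, (fderiv ℝ φ x x + finrank ℝ F * φ x) ∂μ = 0 := by
    rw [integral_add hint_dφ (hint_φ.const_mul _), integral_const_mul,
      integral_fderiv_apply_self hφ hsφ, neg_add_cancel]
  have hmono : ∫ x, (σ / 2 * φ x - 2 / σ * ψ x) ∂μ ≤
      ∫ x, (fderiv ℝ φ x x + finrank ℝ F * φ x) ∂μ :=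
    integral_mono ((hint_φ.const_mul _).sub (hint_ψ.const_mul _))
      (hint_dφ.add (hint_φ.const_mul _))
      fun x ↦ le_fderiv_one_add_norm_sq_rpow_mul_sq_apply_self_add hσ hσn
        (hu.differentiable one_ne_zero x)
  rw [heuler, integral_sub (hint_φ.const_mul _) (hint_ψ.const_mul _), integral_const_mul,
    integral_const_mul, sub_nonpos] at hmono
  calc ∫ x, φ x ∂μ = 2 / σ * (σ / 2 * ∫ x, φ x ∂μ) := by field_simp
    _ ≤ 2 / σ * (2 / σ * ∫ x, ψ x ∂μ) := by gcongr
    _ = (2 / σ) ^ 2 * ∫ x, ψ x ∂μ := by ring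

end Weight

/-- The weighted Hardy–Poincaré inequality (5.3):
`(∫ w^{-(3-σ)} u²)^{1/2} ≤ C (∫ w^{-(1-σ)} |∇u|²)^{1/2}` for `u ∈ C¹_c(ℝ³)`. -/
theorem weighted_poincare (σ : ℝ) (hσ : 0 < σ) (hσ1 : σ ≤ 1) :
    ∃ C > 0, ∀ u : EuclideanSpace ℝ (Fin 3) → ℝ,
      ContDiff ℝ 1 u → HasCompactSupport u →
      (∫ x : EuclideanSpace ℝ (Fin 3),
          Real.sqrt (1 + ‖x‖ ^ 2) ^ (-(3 - σ)) * (u x) ^ 2) ^ ((1 : ℝ) / 2)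
        ≤ C * (∫ x : EuclideanSpace ℝ (Fin 3),
            Real.sqrt (1 + ‖x‖ ^ 2) ^ (-(1 - σ)) *
              ∑ k : Fin 3, (fderiv ℝ u x (EuclideanSpace.single k 1)) ^ 2) ^ ((1 : ℝ) / 2) := by
  refine ⟨2 / σ, by positivity, fun u hu hsu ↦ ?_⟩
  have hweight (s : ℝ) (x : EuclideanSpace ℝ (Fin 3)) :
      √(1 + ‖x‖ ^ 2) ^ s = (1 + ‖x‖ ^ 2) ^ (s / 2) :=
    (Real.rpow_div_two_eq_sqrt s (by positivity)).symm
  have hgrad (x : EuclideanSpace ℝ (Fin 3)) :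
      ∑ k, fderiv ℝ u x (EuclideanSpace.single k 1) ^ 2 = ‖fderiv ℝ u x‖ ^ 2 := by
    simpa using (EuclideanSpace.basisFun (Fin 3) ℝ).sum_sq_apply_eq_norm_sq (fderiv ℝ u x)
  have hbound := integral_one_add_norm_sq_rpow_mul_sq_le (μ := volume) hσ
    (by rw [finrank_euclideanSpace_fin]; push_cast; linarith) hu hsu
  simp only [finrank_euclideanSpace_fin, Nat.cast_ofNat] at hbound
  simp only [hweight, hgrad, ← Real.sqrt_eq_rpow]
  calc √(∫ x, (1 + ‖x‖ ^ 2) ^ (-(3 - σ) / 2) * u x ^ 2)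
      ≤ √((2 / σ) ^ 2 * ∫ x, (1 + ‖x‖ ^ 2) ^ (-(1 - σ) / 2) * ‖fderiv ℝ u x‖ ^ 2) := by
        refine Real.sqrt_le_sqrt ?_
        convert hbound using 5 <;> ring_nf
    _ = 2 / σ * √(∫ x, (1 + ‖x‖ ^ 2) ^ (-(1 - σ) / 2) * ‖fderiv ℝ u x‖ ^ 2) := by
        rw [Real.sqrt_mul (by positivity), Real.sqrt_sq (by positivity)]
end

section
/- Let 0 < σ ≤ 1, 1 ≤ q ≤ ∞, w(x) = (1+|x|²)^{1/2}, and u(y) = v(x(y)) under y = x/w(x)^{1−σ} with v ∈ C¹. Then σ^{1/q} ‖w^{(1−3/q)(1−σ)} ∂v‖_q ≤ ‖∂u‖_q ≤ σ^{−1} ‖w^{(1−3/q)(1−σ)} ∂v‖_q, where |∂v|² = Σ_k |∂_k v|². -/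
open MeasureTheory InnerProductSpace
open scoped ENNReal RealInnerProductSpace

/-!
Write `⟨x⟩ = √(1 + ‖x‖²)` and `ρ = ⟨x⟩ ^ (1 - σ)`, so that `T x = ρ⁻¹ • x`. The derivative of `T`
is `ρ⁻¹ (I - c x xᵀ)` with `c = (1 - σ) / ⟨x⟩²`, and the symmetric factor has the eigenvalue `1`
on `x^⊥` and `1 - c ‖x‖² ∈ [σ, 1]` along `x`. Hence `σ ≤ ρ³ |det DT| ≤ 1`, and since
`∂v = ρ⁻¹ (I - c x xᵀ) (∂u ∘ T)`, also `σ |∂u ∘ T| ≤ ρ |∂v| ≤ |∂u ∘ T|`. For `q < ∞`, substitute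
`y = T x` in `∫ |∂u| ^ q`: the weight `ρ ^ (1 - 3 / q)` is chosen so that
`(ρ ^ (1 - 3 / q) |∂v|) ^ q = ρ⁻³ (ρ |∂v|) ^ q`, which the Jacobian bound compares with
`|det DT| |∂u ∘ T| ^ q`. For `q = ∞` both norms are suprema of continuous functions and `T` is onto.
-/

theorem Real.inv_sqrt_rpow {a : ℝ} (ha : 0 ≤ a) (α : ℝ) : (√a ^ α)⁻¹ = a ^ (-α / 2) := by
  rw [Real.sqrt_eq_rpow, ← Real.rpow_mul ha, ← Real.rpow_neg ha]
  ring_nf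

theorem div_one_add_mul_mem_Icc {α s : ℝ} (hα : 0 ≤ α) (hs : 0 ≤ s) :
    α / (1 + s) * s ∈ Set.Icc 0 α := by
  refine ⟨by positivity, ?_⟩
  rw [div_mul_eq_mul_div, div_le_iff₀ (by positivity)]
  nlinarith

theorem rpow_bounds_of_jacobian_bounds {σ ρ J a v r : ℝ} {n : ℕ} (hσ : 0 < σ) (hρ : 0 < ρ)
    (hr : 0 < r) (hv : 0 ≤ v) (hJ : J * ρ ^ n ∈ Set.Icc σ 1) (hav : ρ * v ∈ Set.Icc (σ * a) a) :
    (σ ^ (1 / r) * (ρ ^ (1 - n / r) * v)) ^ r ≤ J * a ^ r ∧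
      J * a ^ r ≤ (σ⁻¹ * (ρ ^ (1 - n / r) * v)) ^ r := by
  have hρn : 0 < ρ ^ n := pow_pos hρ n
  have hρv : 0 ≤ ρ * v := mul_nonneg hρ.le hv
  have ha : 0 ≤ a := hρv.trans hav.2
  have hweight : ∀ c : ℝ, 0 ≤ c →
      (c * (ρ ^ (1 - n / r) * v)) ^ r = (c * (ρ * v)) ^ r / ρ ^ n := by
    intro c hc
    rw [Real.mul_rpow hc hρv, Real.mul_rpow hρ.le hv, Real.mul_rpow hc (by positivity),
      Real.mul_rpow (by positivity) hv, ← Real.rpow_mul hρ.le, sub_mul, one_mul,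
      div_mul_cancel₀ _ hr.ne', Real.rpow_sub hρ, Real.rpow_natCast]
    ring
  constructor
  · rw [hweight _ (by positivity), Real.mul_rpow (by positivity) hρv, ← Real.rpow_mul hσ.le,
      one_div_mul_cancel hr.ne', Real.rpow_one, div_le_iff₀ hρn]
    calc σ * (ρ * v) ^ r ≤ J * ρ ^ n * a ^ r :=
          mul_le_mul hJ.1 (Real.rpow_le_rpow hρv hav.2 hr.le) (by positivity) (hσ.le.trans hJ.1)
      _ = J * a ^ r * ρ ^ n := by ring
  · rw [hweight _ (inv_nonneg.2 hσ.le), le_div_iff₀ hρn]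
    have ha' : a ≤ σ⁻¹ * (ρ * v) := by rw [le_inv_mul_iff₀ hσ]; exact hav.1
    calc J * a ^ r * ρ ^ n = J * ρ ^ n * a ^ r := by ring
      _ ≤ 1 * (σ⁻¹ * (ρ * v)) ^ r :=
          mul_le_mul hJ.2 (Real.rpow_le_rpow ha ha' hr.le) (by positivity) zero_le_one
      _ = (σ⁻¹ * (ρ * v)) ^ r := one_mul _

section InnerProduct

variable {E : Type*} [NormedAddCommGroup E] [InnerProductSpace ℝ E]

theorem norm_sub_smul_inner_smul_sq (g x : E) (c : ℝ) :
    ‖g - (c * ⟪x, g⟫) • x‖ ^ 2 = ‖g‖ ^ 2 - c * (2 - c * ‖x‖ ^ 2) * ⟪x, g⟫ ^ 2 := by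
  rw [@norm_sub_sq_real, norm_smul, inner_smul_right, real_inner_comm, Real.norm_eq_abs,
    mul_pow, sq_abs]
  ring

variable {c : ℝ} {g x : E}

theorem abs_one_sub_mul_norm_le_norm_sub_smul_inner_smul (hc : 0 ≤ c) (hcx : c * ‖x‖ ^ 2 ≤ 2) :
    |1 - c * ‖x‖ ^ 2| * ‖g‖ ≤ ‖g - (c * ⟪x, g⟫) • x‖ := by
  have hcs : ⟪x, g⟫ ^ 2 ≤ ‖x‖ ^ 2 * ‖g‖ ^ 2 := by
    rw [← mul_pow, ← sq_abs]
    exact pow_le_pow_left₀ (abs_nonneg _) (abs_real_inner_le_norm x g) 2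
  rw [← sq_le_sq₀ (by positivity) (norm_nonneg _), norm_sub_smul_inner_smul_sq, mul_pow, sq_abs]
  nlinarith [mul_le_mul_of_nonneg_left hcs (mul_nonneg hc (sub_nonneg.2 hcx))]

theorem norm_sub_smul_inner_smul_le (hc : 0 ≤ c) (hcx : c * ‖x‖ ^ 2 ≤ 2) :
    ‖g - (c * ⟪x, g⟫) • x‖ ≤ ‖g‖ := by
  rw [← sq_le_sq₀ (norm_nonneg _) (norm_nonneg _), norm_sub_smul_inner_smul_sq]
  nlinarith [mul_nonneg (mul_nonneg hc (sub_nonneg.2 hcx)) (sq_nonneg ⟪x, g⟫)]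

theorem toDual_comp_id_sub_smul_rankOne [CompleteSpace E] (g x : E) (c : ℝ) :
    toDual ℝ E g ∘L (ContinuousLinearMap.id ℝ E - c • rankOne ℝ x x) =
      toDual ℝ E (g - (c * ⟪x, g⟫) • x) := by
  ext z
  simp only [ContinuousLinearMap.comp_sub, ContinuousLinearMap.comp_id,
    ContinuousLinearMap.comp_smulₛₗ, Real.ringHom_apply, sub_apply, smul_apply,
    ContinuousLinearMap.comp_apply, toDual_apply_apply, rankOne_apply, map_smul, map_sub,
    real_inner_comm x, smul_eq_mul]
  ring

theorem det_id_sub_smul_rankOne [FiniteDimensional ℝ E] (c : ℝ) (x : E) :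
    (ContinuousLinearMap.id ℝ E - c • rankOne ℝ x x).det = 1 - c * ‖x‖ ^ 2 := by
  set b := stdOrthonormalBasis ℝ E
  rw [ContinuousLinearMap.det, ← LinearMap.det_toMatrix b.toBasis]
  simp only [ContinuousLinearMap.toLinearMap_sub, ContinuousLinearMap.toLinearMap_smul, map_sub,
    map_smul, ContinuousLinearMap.coe_id, LinearMap.toMatrix_id, toMatrix_rankOne]
  rw [Matrix.vecMulVec_eq Unit, ← Matrix.smul_mul, Matrix.det_one_sub_mul_comm, Matrix.det_unique]
  have hx : (b.repr x).ofLp ⬝ᵥ b.toBasis.repr x = ‖x‖ ^ 2 := by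
    rw [← b.repr.norm_map, ← real_inner_self_eq_norm_sq, EuclideanSpace.inner_eq_star_dotProduct]
    simp [dotProduct, b.coe_toBasis_repr_apply]
  simp [hx]

end InnerProduct

theorem EuclideanSpace.sqrt_sum_sq_apply_single {ι : Type*} [Fintype ι] [DecidableEq ι]
    (L : StrongDual ℝ (EuclideanSpace ℝ ι)) :
    √(∑ k, L (EuclideanSpace.single k 1) ^ 2) = ‖L‖ := by
  obtain ⟨g, rfl⟩ := (toDual ℝ (EuclideanSpace ℝ ι)).surjective L
  simp [EuclideanSpace.norm_eq g, EuclideanSpace.inner_single_right]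

section RadialShrink

variable {E : Type*} [NormedAddCommGroup E] [InnerProductSpace ℝ E]

noncomputable def radialShrinkFDeriv (α : ℝ) (x : E) : E →L[ℝ] E :=
  (√(1 + ‖x‖ ^ 2) ^ α)⁻¹ • (ContinuousLinearMap.id ℝ E - (α / (1 + ‖x‖ ^ 2)) • rankOne ℝ x x)

theorem hasFDerivAt_radialShrink (α : ℝ) (x : E) :
    HasFDerivAt (fun x : E => (√(1 + ‖x‖ ^ 2) ^ α)⁻¹ • x) (radialShrinkFDeriv α x) x := by
  have hpos : 0 < 1 + ‖x‖ ^ 2 := by positivity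
  simp_rw [radialShrinkFDeriv,
    fun y : E => Real.inv_sqrt_rpow (by positivity : 0 ≤ 1 + ‖y‖ ^ 2) α]
  have h := (((hasStrictFDerivAt_norm_sq x).hasFDerivAt.const_add 1).rpow_const
    (p := -α / 2) (Or.inl hpos.ne')).smul (hasFDerivAt_id x)
  refine h.congr_fderiv ?_
  ext z
  simp only [add_apply, smul_apply, sub_apply, ContinuousLinearMap.id_apply,
    ContinuousLinearMap.smulRight_apply, coe_innerSL_apply, rankOne_apply, id_eq,
    Real.rpow_sub_one hpos.ne', nsmul_eq_mul, Nat.cast_ofNat, smul_eq_mul, smul_smul]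
  module

variable {α : ℝ} (hα0 : 0 ≤ α) (hα1 : α ≤ 1) (x : E)
include hα0 hα1

theorem abs_det_radialShrinkFDeriv_mul_mem_Icc [FiniteDimensional ℝ E] :
    |(radialShrinkFDeriv α x).det| * (√(1 + ‖x‖ ^ 2) ^ α) ^ Module.finrank ℝ E ∈
      Set.Icc (1 - α) 1 := by
  obtain ⟨ht0, htα⟩ := div_one_add_mul_mem_Icc hα0 (sq_nonneg ‖x‖)
  have hρ : 0 < √(1 + ‖x‖ ^ 2) ^ α := by positivity
  rw [radialShrinkFDeriv, ContinuousLinearMap.det, ContinuousLinearMap.toLinearMap_smul,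
    LinearMap.det_smul, ← ContinuousLinearMap.det, det_id_sub_smul_rankOne, abs_mul, abs_pow,
    abs_of_pos (inv_pos.2 hρ), abs_of_nonneg (by linarith), mul_right_comm, ← mul_pow,
    inv_mul_cancel₀ hρ.ne', one_pow, one_mul]
  constructor <;> linarith

theorem norm_comp_radialShrinkFDeriv_mem_Icc [CompleteSpace E] (L : StrongDual ℝ E) :
    √(1 + ‖x‖ ^ 2) ^ α * ‖L ∘L radialShrinkFDeriv α x‖ ∈ Set.Icc ((1 - α) * ‖L‖) ‖L‖ := by
  obtain ⟨ht0, htα⟩ := div_one_add_mul_mem_Icc hα0 (sq_nonneg ‖x‖)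
  have hρ : 0 < √(1 + ‖x‖ ^ 2) ^ α := by positivity
  have hc : 0 ≤ α / (1 + ‖x‖ ^ 2) := by positivity
  obtain ⟨g, rfl⟩ := (toDual ℝ E).surjective L
  rw [radialShrinkFDeriv, ContinuousLinearMap.comp_smul, norm_smul,
    Real.norm_of_nonneg (inv_nonneg.2 hρ.le), ← mul_assoc, mul_inv_cancel₀ hρ.ne', one_mul,
    toDual_comp_id_sub_smul_rankOne, LinearIsometryEquiv.norm_map, LinearIsometryEquiv.norm_map]
  refine ⟨le_trans ?_ (abs_one_sub_mul_norm_le_norm_sub_smul_inner_smul hc (by linarith)),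
    norm_sub_smul_inner_smul_le hc (by linarith)⟩
  rw [abs_of_nonneg (by linarith)]
  gcongr

end RadialShrink

theorem ofReal_abs_mul_enorm_rpow {F : Type*} [NormedAddCommGroup F] (a : ℝ) (y : F) {r : ℝ}
    (hr : 0 ≤ r) : ENNReal.ofReal |a| * ‖y‖ₑ ^ r = ENNReal.ofReal (|a| * ‖y‖ ^ r) := by
  rw [← ofReal_norm, ENNReal.ofReal_rpow_of_nonneg (norm_nonneg _) hr,
    ENNReal.ofReal_mul (abs_nonneg _)]

theorem Continuous.enorm_le_eLpNorm_top {α F : Type*} [TopologicalSpace α] [MeasurableSpace α]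
    {μ : Measure α} [μ.IsOpenPosMeasure] [NormedAddCommGroup F] {f : α → F}
    (hf : Continuous f) (z : α) : ‖f z‖ₑ ≤ eLpNorm f ∞ μ := by
  rw [eLpNorm_exponent_top, eLpNormEssSup, ← iSup_eq_essSup fun x a ha =>
    (isOpen_lt continuous_const hf.enorm).measure_ne_zero μ ⟨x, ha⟩]
  exact le_iSup (‖f ·‖ₑ) z

theorem eLpNorm_top_le_of_norm_le_comp {α β F G : Type*} [MeasurableSpace α] {μ : Measure α}
    [TopologicalSpace β] [MeasurableSpace β] {ν : Measure β} [ν.IsOpenPosMeasure]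
    [NormedAddCommGroup F] [NormedAddCommGroup G] {f : β → F} {g : α → G}
    (hf : Continuous f) (S : α → β) (h : ∀ x, ‖g x‖ ≤ ‖f (S x)‖) :
    eLpNorm g ∞ μ ≤ eLpNorm f ∞ ν := by
  rw [eLpNorm_exponent_top]
  exact essSup_le_of_ae_le _ <| ae_of_all _ fun x =>
    (enorm_le_iff_norm_le.2 (h x)).trans (hf.enorm_le_eLpNorm_top (S x))

section ChangeOfVariables

variable {E F G : Type*} [NormedAddCommGroup E] [NormedSpace ℝ E] [FiniteDimensional ℝ E]
  [MeasurableSpace E] [BorelSpace E] {μ : Measure E} [μ.IsAddHaarMeasure]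
  [NormedAddCommGroup F] [NormedAddCommGroup G]
  {T : E → E} {T' : E → E →L[ℝ] E} {p : ℝ≥0∞} {f : E → F} {g : E → G}

theorem lintegral_eq_lintegral_abs_det_fderiv_mul_comp (hT' : ∀ x, HasFDerivAt T (T' x) x)
    (hT : T.Bijective) (h : E → ℝ≥0∞) :
    ∫⁻ y, h y ∂μ = ∫⁻ x, ENNReal.ofReal |(T' x).det| * h (T x) ∂μ := by
  simpa [hT.surjective.range_eq] using lintegral_image_eq_lintegral_abs_det_fderiv_mul μ
    MeasurableSet.univ (fun x _ => (hT' x).hasFDerivWithinAt) hT.injective.injOn h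

theorem eLpNorm_le_eLpNorm_of_rpow_le_abs_det_mul (hT' : ∀ x, HasFDerivAt T (T' x) x)
    (hT : T.Bijective) (hp0 : p ≠ 0) (hp : p ≠ ∞)
    (h : ∀ x, ‖g x‖ ^ p.toReal ≤ |(T' x).det| * ‖f (T x)‖ ^ p.toReal) :
    eLpNorm g p μ ≤ eLpNorm f p μ := by
  have hr := p.toReal_nonneg
  rw [eLpNorm_eq_lintegral_rpow_enorm_toReal hp0 hp,
    eLpNorm_eq_lintegral_rpow_enorm_toReal hp0 hp,
    lintegral_eq_lintegral_abs_det_fderiv_mul_comp hT' hT fun y => ‖f y‖ₑ ^ p.toReal]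
  gcongr with x
  rw [ofReal_abs_mul_enorm_rpow _ _ hr, ← ofReal_norm,
    ENNReal.ofReal_rpow_of_nonneg (norm_nonneg _) hr]
  exact ENNReal.ofReal_le_ofReal (h x)

theorem eLpNorm_le_eLpNorm_of_abs_det_mul_le_rpow (hT' : ∀ x, HasFDerivAt T (T' x) x)
    (hT : T.Bijective) (hp0 : p ≠ 0) (hp : p ≠ ∞)
    (h : ∀ x, |(T' x).det| * ‖f (T x)‖ ^ p.toReal ≤ ‖g x‖ ^ p.toReal) :
    eLpNorm f p μ ≤ eLpNorm g p μ := by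
  have hr := p.toReal_nonneg
  rw [eLpNorm_eq_lintegral_rpow_enorm_toReal hp0 hp,
    eLpNorm_eq_lintegral_rpow_enorm_toReal hp0 hp,
    lintegral_eq_lintegral_abs_det_fderiv_mul_comp hT' hT fun y => ‖f y‖ₑ ^ p.toReal]
  gcongr with x
  rw [ofReal_abs_mul_enorm_rpow _ _ hr, ← ofReal_norm,
    ENNReal.ofReal_rpow_of_nonneg (norm_nonneg _) hr]
  exact ENNReal.ofReal_le_ofReal (h x)

theorem eLpNorm_bounds_of_jacobian_bounds {σ : ℝ} (hσ : 0 < σ) {n : ℕ} (hp : p ≠ 0)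
    (hT' : ∀ x, HasFDerivAt T (T' x) x) (hT : T.Bijective) {ρ V : E → ℝ} (hρ : ∀ x, 0 < ρ x)
    (hV : ∀ x, 0 ≤ V x) (hf : Continuous f) (hρV : Continuous fun x => ρ x * V x)
    (hJ : ∀ x, |(T' x).det| * ρ x ^ n ∈ Set.Icc σ 1)
    (hfV : ∀ x, ρ x * V x ∈ Set.Icc (σ * ‖f (T x)‖) ‖f (T x)‖) :
    ENNReal.ofReal (σ ^ (1 / p.toReal)) *
        eLpNorm (fun x => ρ x ^ (1 - n / p.toReal) * V x) p μ ≤ eLpNorm f p μ ∧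
      eLpNorm f p μ ≤
        ENNReal.ofReal σ⁻¹ * eLpNorm (fun x => ρ x ^ (1 - n / p.toReal) * V x) p μ := by
  rcases eq_or_ne p ∞ with rfl | hp_top
  · simp only [ENNReal.toReal_top, div_zero, sub_zero, Real.rpow_one, Real.rpow_zero,
      ENNReal.ofReal_one, one_mul]
    refine ⟨eLpNorm_top_le_of_norm_le_comp hf T fun x => ?_, ?_⟩
    · rw [Real.norm_of_nonneg (mul_nonneg (hρ x).le (hV x))]
      exact (hfV x).2
    · rw [← Real.enorm_eq_ofReal (inv_nonneg.2 hσ.le), ← eLpNorm_const_smul]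
      refine eLpNorm_top_le_of_norm_le_comp (hρV.const_smul σ⁻¹) (Function.surjInv hT.2)
        fun y => ?_
      set x := Function.surjInv hT.2 y
      have hlow := (hfV x).1
      rw [Function.surjInv_eq hT.2] at hlow
      rw [Pi.smul_apply, smul_eq_mul, Real.norm_of_nonneg
        (mul_nonneg (inv_nonneg.2 hσ.le) (mul_nonneg (hρ x).le (hV x))), le_inv_mul_iff₀ hσ]
      exact hlow
  · have hr := ENNReal.toReal_pos hp hp_top
    have hB : ∀ x, 0 ≤ ρ x ^ (1 - n / p.toReal) * V x :=
      fun x => mul_nonneg (Real.rpow_nonneg (hρ x).le _) (hV x)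
    constructor
    · rw [← Real.enorm_eq_ofReal (by positivity), ← eLpNorm_const_smul]
      refine eLpNorm_le_eLpNorm_of_rpow_le_abs_det_mul hT' hT hp hp_top fun x => ?_
      rw [Pi.smul_apply, smul_eq_mul, Real.norm_of_nonneg (mul_nonneg (by positivity) (hB x))]
      exact (rpow_bounds_of_jacobian_bounds hσ (hρ x) hr (hV x) (hJ x) (hfV x)).1
    · rw [← Real.enorm_eq_ofReal (inv_nonneg.2 hσ.le), ← eLpNorm_const_smul]
      refine eLpNorm_le_eLpNorm_of_abs_det_mul_le_rpow hT' hT hp hp_top fun x => ?_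
      rw [Pi.smul_apply, smul_eq_mul, Real.norm_of_nonneg (mul_nonneg (by positivity) (hB x))]
      exact (rpow_bounds_of_jacobian_bounds hσ (hρ x) hr (hV x) (hJ x) (hfV x)).2

end ChangeOfVariables

/-- Inequality (5.8): transformation of gradient `L^q` norms under the change
of variables `y = x/w^{1-σ}` (with `u(y) = v(x(y))`, `v ∈ C¹`). -/
theorem change_of_variables_gradient_norms (σ : ℝ) (hσ : 0 < σ) (hσ1 : σ ≤ 1)
    (q : ℝ≥0∞) (hq : 1 ≤ q)
    (u v : EuclideanSpace ℝ (Fin 3) → ℝ)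
    (hv : ContDiff ℝ 1 v) (hu : ContDiff ℝ 1 u)
    (T : EuclideanSpace ℝ (Fin 3) → EuclideanSpace ℝ (Fin 3))
    (hT : ∀ (x : EuclideanSpace ℝ (Fin 3)) (k : Fin 3),
      T x k = x k / Real.sqrt (1 + ‖x‖ ^ 2) ^ (1 - σ))
    (hbij : Function.Bijective T)
    (huv : ∀ x, u (T x) = v x) :
    ENNReal.ofReal (σ ^ ((1 : ℝ) / q.toReal)) *
        eLpNorm (fun x : EuclideanSpace ℝ (Fin 3) =>
          Real.sqrt (1 + ‖x‖ ^ 2) ^ ((1 - 3 / q.toReal) * (1 - σ)) *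
            Real.sqrt (∑ k : Fin 3,
              (fderiv ℝ v x (EuclideanSpace.single k 1)) ^ 2)) q volume
      ≤ eLpNorm (fun y : EuclideanSpace ℝ (Fin 3) =>
          Real.sqrt (∑ k : Fin 3,
            (fderiv ℝ u y (EuclideanSpace.single k 1)) ^ 2)) q volume ∧
    eLpNorm (fun y : EuclideanSpace ℝ (Fin 3) =>
        Real.sqrt (∑ k : Fin 3,
          (fderiv ℝ u y (EuclideanSpace.single k 1)) ^ 2)) q volume
      ≤ ENNReal.ofReal σ⁻¹ *
        eLpNorm (fun x : EuclideanSpace ℝ (Fin 3) =>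
          Real.sqrt (1 + ‖x‖ ^ 2) ^ ((1 - 3 / q.toReal) * (1 - σ)) *
            Real.sqrt (∑ k : Fin 3,
              (fderiv ℝ v x (EuclideanSpace.single k 1)) ^ 2)) q volume := by
  set ρ : EuclideanSpace ℝ (Fin 3) → ℝ := fun x => √(1 + ‖x‖ ^ 2) ^ (1 - σ) with hρ_def
  have hρ : ∀ x, 0 < ρ x := fun x => by positivity
  have hT_eq : T = fun x => (ρ x)⁻¹ • x := by
    funext x
    ext k
    simp [hT, div_eq_inv_mul, ρ]
  have hT' : ∀ x, HasFDerivAt T (radialShrinkFDeriv (1 - σ) x) x :=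
    hT_eq ▸ hasFDerivAt_radialShrink (1 - σ)
  have hv_eq : ∀ x, fderiv ℝ v x = fderiv ℝ u (T x) ∘L radialShrinkFDeriv (1 - σ) x := by
    rw [show v = u ∘ T from funext fun x => (huv x).symm]
    exact fun x => ((hu.differentiable one_ne_zero (T x)).hasFDerivAt.comp x (hT' x)).fderiv
  have hweight : ∀ x : EuclideanSpace ℝ (Fin 3),
      √(1 + ‖x‖ ^ 2) ^ ((1 - 3 / q.toReal) * (1 - σ)) =
        ρ x ^ (1 - ((3 : ℕ) : ℝ) / q.toReal) := by
    intro x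
    rw [hρ_def, ← Real.rpow_mul (by positivity), mul_comm, Nat.cast_ofNat]
  simp only [EuclideanSpace.sqrt_sum_sq_apply_single, hweight]
  have hα0 : 0 ≤ 1 - σ := sub_nonneg.2 hσ1
  have hα1 : 1 - σ ≤ 1 := sub_le_self 1 hσ.le
  refine eLpNorm_bounds_of_jacobian_bounds hσ (zero_lt_one.trans_le hq).ne' hT' hbij hρ
    (fun x => norm_nonneg _) (hu.continuous_fderiv one_ne_zero).norm ?_ (fun x => ?_) (fun x => ?_)
  · exact ((continuous_const.add (continuous_norm.pow 2)).sqrt.rpow_const fun _ => Or.inr hα0).mul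
      (hv.continuous_fderiv one_ne_zero).norm
  · simpa [finrank_euclideanSpace_fin] using abs_det_radialShrinkFDeriv_mul_mem_Icc hα0 hα1 x
  · simpa [hv_eq] using norm_comp_radialShrinkFDeriv_mem_Icc hα0 hα1 x (fderiv ℝ u (T x))
end
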